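/- Let X be a transitive d-dimensional shift that is infinite (as a set of configurations). If the set of periodic points of X is dense in X, then X has maximality type 0, i.e. X has no maximal subsystem. -/
import Mathlib


/-- The group `ℤ^d`. -/
abbrev ZD (d : ℕ) := Fin d → ℤ

/-- A configuration is a map `ℤ^d → ℤ`. -/
abbrev Config (d : ℕ) := ZD d → ℤ

/-- The shift map `σ^u`, defined by `σ^u(x)_v = x_{u+v}`. -/
def shiftMap {d : ℕ} (u : ZD d) (x : Config d) : Config d := fun v => x (u + v)

/-- The sup norm `‖·‖_∞` on `ℤ^d`, valued in `ℕ`. -/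
def normInf {d : ℕ} (n : ZD d) : ℕ := Finset.univ.sup fun i => (n i).natAbs

open Classical in
/-- The metric `δ` on configurations: `δ(x,y) = 2^{-min{‖n‖_∞ : x_n ≠ y_n}}`, `δ(x,x) = 0`. -/
noncomputable def deltaDist {d : ℕ} (x y : Config d) : ℝ :=
  if x = y then 0
  else (2 : ℝ) ^ (-((sInf {m : ℕ | ∃ n : ZD d, normInf n = m ∧ x n ≠ y n} : ℕ) : ℤ))

/-- The closure of a set of configurations with respect to the metric `δ`. -/
def deltaClosure {d : ℕ} (A : Set (Config d)) : Set (Config d) :=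
  {x | ∀ ε : ℝ, 0 < ε → ∃ a ∈ A, deltaDist x a < ε}

/-- A set of configurations is closed for `δ` when it contains all its limit points. -/
def IsDeltaClosed {d : ℕ} (A : Set (Config d)) : Prop := deltaClosure A ⊆ A

/-- A `d`-dimensional shift: a nonempty set of configurations over a common finite
alphabet, closed for `δ` and invariant under every shift map. -/
def IsShift {d : ℕ} (X : Set (Config d)) : Prop :=
  X.Nonempty ∧ (∃ A : Finset ℤ, ∀ x ∈ X, ∀ v : ZD d, x v ∈ A) ∧ IsDeltaClosed X ∧
    ∀ u : ZD d, ∀ x ∈ X, shiftMap u x ∈ X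

/-- The Hausdorff metric `δ_H` on the space of shifts. -/
noncomputable def deltaH {d : ℕ} (X Z : Set (Config d)) : ℝ :=
  max (⨆ x : X, ⨅ z : Z, deltaDist (x : Config d) (z : Config d))
      (⨆ z : Z, ⨅ x : X, deltaDist (x : Config d) (z : Config d))

/-- A subsystem of a shift `X`: a nonempty closed shift-invariant subset of `X`. -/
def IsSubsystem {d : ℕ} (Z X : Set (Config d)) : Prop :=
  Z.Nonempty ∧ Z ⊆ X ∧ IsDeltaClosed Z ∧ ∀ u : ZD d, ∀ z ∈ Z, shiftMap u z ∈ Z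

/-- A maximal subsystem of `X`: a proper subsystem such that any subsystem strictly
between it and `X` equals `X`. -/
def IsMaximalSubsystem {d : ℕ} (Z X : Set (Config d)) : Prop :=
  IsSubsystem Z X ∧ Z ≠ X ∧ ∀ Z', IsSubsystem Z' X → Z ⊂ Z' → Z' = X

/-- An outcast of `X`: a proper subsystem contained in no maximal subsystem of `X`. -/
def IsOutcast {d : ℕ} (Z X : Set (Config d)) : Prop :=
  IsSubsystem Z X ∧ Z ≠ X ∧ ∀ M, IsMaximalSubsystem M X → ¬ Z ⊆ M

/-- A pattern with finite support `U` (given by the values of `p` on `U`) appears in the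
configuration `x`. -/
def PatternAppears {d : ℕ} (U : Finset (ZD d)) (p : ZD d → ℤ) (x : Config d) : Prop :=
  ∃ u : ZD d, ∀ v ∈ U, x (u + v) = p v

/-- The set of configurations over the alphabet `A` avoiding every pattern in `F`. -/
def XofF {d : ℕ} (A : Finset ℤ) (F : Set (Finset (ZD d) × (ZD d → ℤ))) : Set (Config d) :=
  {x | (∀ v : ZD d, x v ∈ A) ∧ ∀ q ∈ F, ¬ PatternAppears q.1 q.2 x}

/-- A shift of finite type: defined by a finite alphabet and a finite set of forbidden
patterns. -/
def IsSFT {d : ℕ} (X : Set (Config d)) : Prop :=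
  ∃ (A : Finset ℤ) (F : Finset (Finset (ZD d) × (ZD d → ℤ))), X = XofF A (F : Set _)

/-- `X` is an isolated point of the subspace `S` (with the Hausdorff metric `δ_H`). -/
def IsolatedIn {d : ℕ} (S : Set (Set (Config d))) (X : Set (Config d)) : Prop :=
  X ∈ S ∧ ∃ ε : ℝ, 0 < ε ∧ ∀ Z ∈ S, deltaH X Z < ε → Z = X

/-- The orbit of a configuration under the shift action. -/
def orbit {d : ℕ} (x : Config d) : Set (Config d) := {y | ∃ u : ZD d, y = shiftMap u x}

/-- A shift is transitive when some point has dense orbit. -/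
def IsTransitive {d : ℕ} (X : Set (Config d)) : Prop :=
  IsShift X ∧ ∃ x ∈ X, X ⊆ deltaClosure (orbit x)

/-- A shift is minimal when its only subsystem is itself. -/
def IsMinimalShift {d : ℕ} (X : Set (Config d)) : Prop :=
  IsShift X ∧ ∀ Z, IsSubsystem Z X → Z = X

lemma deltaDist_pos' {d : ℕ} {x y : Config d} (h : x ≠ y) : 0 < deltaDist x y := by
  unfold deltaDist
  rw [if_neg h]
  positivity

lemma deltaClosure_mono' {d : ℕ} {A B : Set (Config d)} (h : A ⊆ B) :
    deltaClosure A ⊆ deltaClosure B := by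
  intro x hx ε hε
  obtain ⟨a, ha, hd⟩ := hx ε hε
  exact ⟨a, h ha, hd⟩

lemma finite_isDeltaClosed' {d : ℕ} {A : Set (Config d)} (hA : A.Finite) :
    IsDeltaClosed A := by
  intro x hx
  by_contra hxA
  obtain ⟨a0, ha0, _⟩ := hx 1 one_pos
  set s := hA.toFinset.image (fun a => deltaDist x a) with hs_def
  have hs : s.Nonempty := ⟨_, Finset.mem_image_of_mem _ (hA.mem_toFinset.2 ha0)⟩
  have hεpos : 0 < s.min' hs := by
    obtain ⟨a, haA, hae⟩ := Finset.mem_image.1 (s.min'_mem hs)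
    rw [← hae]
    exact deltaDist_pos' (fun h => hxA (h ▸ hA.mem_toFinset.1 haA))
  obtain ⟨a, haA, hlt⟩ := hx _ hεpos
  have hle : s.min' hs ≤ deltaDist x a :=
    Finset.min'_le _ _ (Finset.mem_image_of_mem _ (hA.mem_toFinset.2 haA))
  linarith

lemma deltaClosure_union' {d : ℕ} {A B : Set (Config d)} :
    deltaClosure (A ∪ B) ⊆ deltaClosure A ∪ deltaClosure B := by
  intro x hx
  by_contra h
  rw [Set.mem_union] at h
  push_neg at h
  obtain ⟨h1, h2⟩ := h
  simp only [deltaClosure, Set.mem_setOf_eq, not_forall] at h1 h2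
  push_neg at h1 h2
  obtain ⟨ε₁, hε₁, H1⟩ := h1
  obtain ⟨ε₂, hε₂, H2⟩ := h2
  obtain ⟨a, ha, hd⟩ := hx (min ε₁ ε₂) (lt_min hε₁ hε₂)
  rcases ha with ha | ha
  · have := H1 a ha
    have := min_le_left ε₁ ε₂
    linarith
  · have := H2 a ha
    have := min_le_right ε₁ ε₂
    linarith

lemma shiftMap_zero' {d : ℕ} (x : Config d) : shiftMap 0 x = x := by
  funext v; simp [shiftMap]

lemma shiftMap_comp' {d : ℕ} (u w : ZD d) (x : Config d) :
    shiftMap u (shiftMap w x) = shiftMap (w + u) x := by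
  funext v; simp [shiftMap, add_assoc]

lemma self_mem_orbit' {d : ℕ} (x : Config d) : x ∈ orbit x :=
  ⟨0, (shiftMap_zero' x).symm⟩

lemma orbit_shift_invariant' {d : ℕ} (x : Config d) (u : ZD d) {y : Config d}
    (hy : y ∈ orbit x) : shiftMap u y ∈ orbit x := by
  obtain ⟨w, rfl⟩ := hy
  exact ⟨w + u, shiftMap_comp' u w x⟩

lemma orbit_subset_orbit' {d : ℕ} {x p : Config d} (h : x ∈ orbit p) :
    orbit x ⊆ orbit p := by
  rintro y ⟨u, rfl⟩
  exact orbit_shift_invariant' p u h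

/-- An infinite transitive shift with a dense set of periodic points has
no maximal subsystem. -/
theorem dense_periodic_points_implies_type_zero
    (d : ℕ) (hd : 1 ≤ d) (X : Set (Config d)) (hX : IsTransitive X) (hinf : X.Infinite)
    (hper : X ⊆ deltaClosure {x ∈ X | (orbit x).Finite}) :
    ∀ Z : Set (Config d), ¬ IsMaximalSubsystem Z X := by
  intro Z hZmax'
  obtain ⟨⟨hZne', hZX, hZcl, hZinv⟩, hZne, hZmax⟩ := hZmax'
  obtain ⟨⟨hXne, ⟨A, hA⟩, hXcl, hXinv⟩, x₀, hx₀X, hdense⟩ := hX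
  -- there is a periodic point of X outside Z
  have hnotsub : ¬ X ⊆ Z := fun h => hZne (subset_antisymm hZX h)
  obtain ⟨y, hyX, hyZ⟩ := Set.not_subset.1 hnotsub
  by_cases hcase : {x ∈ X | (orbit x).Finite} ⊆ Z
  · exact hyZ (hZcl (deltaClosure_mono' hcase (hper hyX)))
  obtain ⟨p, ⟨hpX, hporb⟩, hpZ⟩ := Set.not_subset.1 hcase
  set Z' := Z ∪ orbit p with hZ'def
  have horbX : orbit p ⊆ X := by
    rintro q ⟨u, rfl⟩
    exact hXinv u p hpX
  have hZ'sub : IsSubsystem Z' X := by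
    refine ⟨⟨p, Or.inr (self_mem_orbit' p)⟩, Set.union_subset hZX horbX, ?_, ?_⟩
    · intro x hx
      rcases deltaClosure_union' hx with h | h
      · exact Or.inl (hZcl h)
      · exact Or.inr (finite_isDeltaClosed' hporb h)
    · intro u z hz
      rcases hz with hz | hz
      · exact Or.inl (hZinv u z hz)
      · exact Or.inr (orbit_shift_invariant' p u hz)
  have hZ'eq : Z' = X := by
    refine hZmax Z' hZ'sub ?_
    exact (Set.ssubset_iff_of_subset Set.subset_union_left).2
      ⟨p, Or.inr (self_mem_orbit' p), hpZ⟩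
  have hx₀' : x₀ ∈ Z' := hZ'eq ▸ hx₀X
  rcases hx₀' with h | h
  · -- transitive point in Z forces X = Z
    have horbZ : orbit x₀ ⊆ Z := by
      rintro q ⟨u, rfl⟩
      exact hZinv u x₀ h
    exact hZne (subset_antisymm hZX
      (fun w hw => hZcl (deltaClosure_mono' horbZ (hdense hw))))
  · -- transitive point in orbit p forces X finite
    have h1 : orbit x₀ ⊆ orbit p := orbit_subset_orbit' h
    have h2 : X ⊆ orbit p := fun w hw =>
      finite_isDeltaClosed' hporb (deltaClosure_mono' h1 (hdense hw))
    exact hinf (hporb.subset h2)
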